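/- Let R be a principal ideal domain with field of fractions F, let L be a free R-module of finite rank, V = F ⊗_R L, W ⊆ V an F-subspace, and M = W ∩ L. Then M is a free R-module whose rank equals the dimension of W over F. -/

import Mathlib

/-!
`M` is the preimage of `W` under the localization map `L → F ⊗[R] L`. Every element of `W` has a
multiple by a nonzero scalar of `R` in the image of `M`, so `W` is the localization of `M` at the
nonzero elements of `R`, and localizing at nonzero divisors preserves rank. Freeness holds because
`M` is a submodule of a finite free module over a PID.
-/

open scoped TensorProduct nonZeroDivisors

universe uR uS uL uV

namespace Submodule

variable {R : Type uR} {S : Type uS} {L : Type uL} {V : Type uV} [CommRing R] [CommRing S]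
  [Algebra R S] [AddCommGroup L] [Module R L] [AddCommGroup V] [Module R V] [Module S V]
  [IsScalarTower R S V] {p : Submonoid R} [IsLocalization p S]
  (j : L →ₗ[R] V) [IsLocalizedModule p j]

theorem localized'_comap_restrictScalars (W : Submodule S V) :
    ((W.restrictScalars R).comap j).localized' S p j = W :=
  (localized'gi S p j).l_u_eq W

theorem lift_rank_comap_restrictScalars (hp : p ≤ R⁰) (W : Submodule S V) :
    Cardinal.lift.{uV} (Module.rank R ((W.restrictScalars R).comap j)) =
      Cardinal.lift.{uL} (Module.rank S W) := by
  rw [← IsLocalizedModule.lift_rank_eq p (toLocalized' S p j _) hp,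
    ← IsLocalization.rank_eq S p hp, localized'_comap_restrictScalars]

end Submodule

theorem stmt1.{u, v, w} (R : Type u) (F : Type v) (L : Type w) [CommRing R] [IsDomain R] [IsPrincipalIdealRing R]
    [Field F] [Algebra R F] [IsFractionRing R F]
    [AddCommGroup L] [Module R L] [Module.Free R L] [Module.Finite R L]
    (W : Submodule F (F ⊗[R] L))
    (M : Submodule R L)
    (hM : ∀ m : L, m ∈ M ↔ (1 : F) ⊗ₜ[R] m ∈ W) :
    Module.Free R M ∧ Cardinal.lift.{v} (Module.rank R M) = Cardinal.lift.{w} (Module.rank F W) := by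
  obtain rfl : M = (W.restrictScalars R).comap (TensorProduct.mk R F L 1) := Submodule.ext hM
  refine ⟨inferInstance, ?_⟩
  rw [← Cardinal.lift_umax]
  exact Submodule.lift_rank_comap_restrictScalars _ le_rfl W
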